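/- In EP′(ℂ), for every z ∈ ℂ∖{0,1} and all p,q,p′,q′,s ∈ ℤ the following hold: (i) [z;p,q] − [z;p,q′] = [z;p,q−1] − [z;p,q′−1]; (ii) [z;p,q] − [z;p′,q] = [z;p−1,q] − [z;p′−1,q]; (iii) [z;p,q] − [z;p+s,q−s] = [z;p+1,q−1] − [z;p+s+1,q−s−1]. -/

import Mathlib

/-!
Formalization of a statement from "Extended Bloch group and the
Cheeger–Chern–Simons class" by W. D. Neumann.
-/

noncomputable section
open scoped Classical
open Complex

namespace ExtendedBloch

/-- The set `Ĉ ⊆ ℂ × ℂ`: pairs `(w₀, w₁)` with `ε₀ e^{w₀} + ε₁ e^{-w₁} = 1`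
for some signs `ε₀, ε₁ ∈ {1, -1}`. -/
def CoverSet : Set (ℂ × ℂ) :=
  {w | ∃ e₀ e₁ : ℂ, (e₀ = 1 ∨ e₀ = -1) ∧ (e₁ = 1 ∨ e₁ = -1) ∧
      e₀ * Complex.exp w.1 + e₁ * Complex.exp (-w.2) = 1}

/-- `Ĉ` as a type, with the subspace topology from `ℂ × ℂ`. -/
abbrev Cover : Type := ↥CoverSet

/-- The point `(z; p, q) := (Log z + pπi, -Log (1-z) + qπi)`. -/
def ellPair (z : ℂ) (p q : ℤ) : ℂ × ℂ :=
  (Complex.log z + (p : ℂ) * (Real.pi : ℂ) * Complex.I,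
   -Complex.log (1 - z) + (q : ℂ) * (Real.pi : ℂ) * Complex.I)

lemma neg_one_zpow_cases (n : ℤ) : (-1 : ℂ) ^ n = 1 ∨ (-1 : ℂ) ^ n = -1 := by
  rcases Int.even_or_odd n with h | h
  · exact Or.inl h.neg_one_zpow
  · exact Or.inr h.neg_one_zpow

lemma exp_log_add_int (z : ℂ) (hz : z ≠ 0) (p : ℤ) :
    Complex.exp (Complex.log z + (p : ℂ) * (Real.pi : ℂ) * Complex.I) = z * (-1) ^ p := by
  rw [Complex.exp_add, Complex.exp_log hz]
  congr 1
  have h : (p : ℂ) * (Real.pi : ℂ) * Complex.I = (p : ℤ) * ((Real.pi : ℂ) * Complex.I) := by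
    ring
  rw [h, Complex.exp_int_mul, Complex.exp_pi_mul_I]

/-- `(z; p, q)` lies in `Ĉ` whenever `z ∈ ℂ ∖ {0, 1}`. -/
lemma ellPair_mem {z : ℂ} (h0 : z ≠ 0) (h1 : z ≠ 1) (p q : ℤ) :
    ellPair z p q ∈ CoverSet := by
  have h1' : (1 : ℂ) - z ≠ 0 := sub_ne_zero.mpr (Ne.symm h1)
  refine ⟨(-1 : ℂ) ^ (-p), (-1 : ℂ) ^ q, neg_one_zpow_cases _, neg_one_zpow_cases _, ?_⟩
  have e1 : Complex.exp ((ellPair z p q).1) = z * (-1) ^ p := exp_log_add_int z h0 p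
  have e2 : Complex.exp (-(ellPair z p q).2) = (1 - z) * (-1) ^ (-q) := by
    have h : -(ellPair z p q).2 =
        Complex.log (1 - z) + ((-q : ℤ) : ℂ) * (Real.pi : ℂ) * Complex.I := by
      simp only [ellPair]; push_cast; ring
    rw [h]; exact exp_log_add_int _ h1' (-q)
  rw [e1, e2]
  have hne : (-1 : ℂ) ≠ 0 := by norm_num
  have hp : (-1 : ℂ) ^ (-p) * (-1 : ℂ) ^ p = 1 := by
    rw [← zpow_add₀ hne]; simp
  have hq : (-1 : ℂ) ^ q * (-1 : ℂ) ^ (-q) = 1 := by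
    rw [← zpow_add₀ hne]; simp
  calc (-1 : ℂ) ^ (-p) * (z * (-1) ^ p) + (-1 : ℂ) ^ q * ((1 - z) * (-1) ^ (-q))
      = z * ((-1 : ℂ) ^ (-p) * (-1 : ℂ) ^ p) + (1 - z) * ((-1 : ℂ) ^ q * (-1 : ℂ) ^ (-q)) := by
        ring
    _ = 1 := by rw [hp, hq]; ring

/-- The set `FT` of five-tuples entering the five term relation. -/
def FTSet : Set (Fin 5 → ℂ) :=
  {v | ∃ x y : ℂ, (x ≠ 0 ∧ x ≠ 1) ∧ (y ≠ 0 ∧ y ≠ 1) ∧ x ≠ y ∧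
      v = ![x, y, y / x, (1 - x⁻¹) / (1 - y⁻¹), (1 - x) / (1 - y)]}

/-- `FT⁺`: tuples in `FT` all of whose coordinates lie in the upper half plane. -/
def FTPlus : Set (Fin 5 → ℂ) := {v | v ∈ FTSet ∧ ∀ i, 0 < (v i).im}

/-- The covering projection `π : Ĉ → ℂ ∖ {0,1}`; on `Ĉ` it equals `ε₀ e^{w₀}`
(note `(e^{2w₀} - e^{-2w₁} + 1)/2 = ε₀ e^{w₀}` on `Ĉ`). -/
def projC (w : ℂ × ℂ) : ℂ :=
  (Complex.exp (2 * w.1) - Complex.exp (-(2 * w.2)) + 1) / 2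

def proj5 (u : Fin 5 → Cover) : Fin 5 → ℂ := fun i => projC (u i : ℂ × ℂ)

/-- The base points `((x₀;0,0), …, (x₄;0,0))` with `(x₀,…,x₄) ∈ FT⁺`. -/
def basePts : Set (Fin 5 → Cover) :=
  {u | ∃ x ∈ FTPlus, ∀ i, (u i : ℂ × ℂ) = ellPair (x i) 0 0}

/-- `liftFT₀`: the component of the preimage of `FT` in `Ĉ⁵` containing the base points
(these all lie in a single component since `FT⁺` is connected). -/
def liftFT₀ : Set (Fin 5 → Cover) :=
  ⋃ u ∈ basePts, connectedComponentIn (proj5 ⁻¹' FTSet) u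

/-- The action of `ℤ × ℤ` on `ℂ × ℂ` by `(w₀, w₁) ↦ (w₀ + pπi, w₁ + qπi)`. -/
def shiftPair (w : ℂ × ℂ) (t : ℤ × ℤ) : ℂ × ℂ :=
  (w.1 + (t.1 : ℂ) * (Real.pi : ℂ) * Complex.I,
   w.2 + (t.2 : ℂ) * (Real.pi : ℂ) * Complex.I)

/-- The set `V ⊆ (ℤ × ℤ)⁵`. -/
def VSet : Set (Fin 5 → ℤ × ℤ) :=
  {v | ∃ p₀ p₁ q₀ q₁ q₂ : ℤ,
      v = ![(p₀, q₀), (p₁, q₁), (p₁ - p₀, q₂), (p₁ - p₀ + q₁ - q₀, q₂ - q₁),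
            (q₁ - q₀, q₂ - q₁ - p₀)]}

/-- `liftFT = liftFT₀ + V`. -/
def liftFT : Set (Fin 5 → Cover) :=
  {w | ∃ u ∈ liftFT₀, ∃ v ∈ VSet, ∀ i, (w i : ℂ × ℂ) = shiftPair (u i : ℂ × ℂ) (v i)}

/-- Relators of the lifted five term relation. -/
def fiveTermRelSet : Set (FreeAbelianGroup Cover) :=
  {a | ∃ u : Fin 5 → Cover, u ∈ liftFT ∧
      a = ∑ i : Fin 5, ((-1 : ℤ) ^ (i : ℕ)) • FreeAbelianGroup.of (u i)}

/-- Relators of the transfer relation. -/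
def transferRelSet : Set (FreeAbelianGroup Cover) :=
  {a | ∃ (z : ℂ) (h0 : z ≠ 0) (h1 : z ≠ 1) (p q p' q' : ℤ),
      a = FreeAbelianGroup.of (⟨ellPair z p q, ellPair_mem h0 h1 p q⟩ : Cover)
        + FreeAbelianGroup.of (⟨ellPair z p' q', ellPair_mem h0 h1 p' q'⟩ : Cover)
        - FreeAbelianGroup.of (⟨ellPair z p q', ellPair_mem h0 h1 p q'⟩ : Cover)
        - FreeAbelianGroup.of (⟨ellPair z p' q, ellPair_mem h0 h1 p' q⟩ : Cover)}

def epRel : AddSubgroup (FreeAbelianGroup Cover) :=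
  AddSubgroup.closure (fiveTermRelSet ∪ transferRelSet)

/-- The extended pre-Bloch group `EP(ℂ)`: the free abelian group on `Ĉ` modulo the
lifted five term relations and the transfer relations. -/
abbrev EP : Type := FreeAbelianGroup Cover ⧸ epRel

/-- The class of a point of `Ĉ` in `EP(ℂ)`. -/
def epMk (w : Cover) : EP := QuotientAddGroup.mk (FreeAbelianGroup.of w)

/-- The class `[z; p, q] ∈ EP(ℂ)` (junk value `0` if `z ∈ {0, 1}`). -/
def epGen (z : ℂ) (p q : ℤ) : EP :=
  if h : z ≠ 0 ∧ z ≠ 1 then epMk ⟨ellPair z p q, ellPair_mem h.1 h.2 p q⟩ else 0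

/-- `χ : ℂ* → EP(ℂ)`, `χ(z) = [z;0,1] - [z;0,0]` (and `χ(1) = 0`). -/
def chi (z : ℂ) : EP := epGen z 0 1 - epGen z 0 0

/-- Relation subgroup for `EP′(ℂ)` (no transfer relation). -/
def epRel' : AddSubgroup (FreeAbelianGroup Cover) := AddSubgroup.closure fiveTermRelSet

/-- `EP′(ℂ)`: the free abelian group on `Ĉ` modulo only the lifted five term relations. -/
abbrev EP' : Type := FreeAbelianGroup Cover ⧸ epRel'

def epMk' (w : Cover) : EP' := QuotientAddGroup.mk (FreeAbelianGroup.of w)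

/-- The class `[z; p, q] ∈ EP′(ℂ)` (junk value `0` if `z ∈ {0, 1}`). -/
def epGen' (z : ℂ) (p q : ℤ) : EP' :=
  if h : z ≠ 0 ∧ z ≠ 1 then epMk' ⟨ellPair z p q, ellPair_mem h.1 h.2 p q⟩ else 0

/-- The natural surjection `EP′(ℂ) → EP(ℂ)`. -/
def toEP : EP' →+ EP :=
  QuotientAddGroup.map epRel' epRel (AddMonoidHom.id _)
    (by
      rw [AddSubgroup.comap_id]
      exact AddSubgroup.closure_mono Set.subset_union_left)

/-- The element `κ(x) = [x;1,1] + [x;0,0] - [x;1,0] - [x;0,1] ∈ EP′(ℂ)`. -/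
def kappa (z : ℂ) : EP' := epGen' z 1 1 + epGen' z 0 0 - epGen' z 1 0 - epGen' z 0 1

/-!
The lifted five-term relations at a point `u ∈ liftFT₀` form a family indexed by the shifts
`v ∈ V`, and `V` is closed under addition. Given `z`, start from a configuration in `FT⁺` and move
its first coordinate to `z` inside `FT` (keeping the second one fixed); lifting this path to `Ĉ⁵`
coordinatewise, with logarithms obtained from the covering `exp : ℂ → ℂ ∖ {0}`, gives `x ∈ FT` with
`x₀ = z` and lifts `c` such that `R(v) := ∑ (-1)ⁱ [xᵢ; cᵢ + vᵢ] = 0` for every `v ∈ V`.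
The mixed second difference of `R` along two shifts `a, b ∈ V` is the alternating sum of the
second differences of the coordinates, and the `i`-th one vanishes whenever `aᵢ = 0` or `bᵢ = 0`.
Choosing `a, b` that do not both move any coordinate `i ≥ 1` isolates the second difference of
`[z; ·]` along `(a₀, b₀)`; this gives relations (i) and (iii), and (ii) once the only overlap, in
the coordinate `x₄`, is removed by (i).
-/

open fwdDiff

section fwdDiff

variable {M G : Type*} [AddCommMonoid M] [AddCommGroup G]

@[simp]
lemma fwdDiff_zero_left (f : M → G) : Δ_[0] f = 0 := by
  ext
  simp [fwdDiff]

@[simp]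
lemma fwdDiff_zero_right (h : M) : Δ_[h] (0 : M → G) = 0 :=
  fwdDiff_const h 0

lemma fwdDiff_fwdDiff_eq_zero_iff {f : M → G} {w a b : M} :
    Δ_[a] (Δ_[b] f) w = 0 ↔ f w - f (w + b) = f (w + a) - f (w + a + b) := by
  rw [fwdDiff, fwdDiff, fwdDiff, add_right_comm, ← sub_eq_zero (a := f w - f (w + b))]
  constructor <;> intro h <;> rw [← h] <;> abel

lemma fwdDiff_fwdDiff_add_eq_zero {f : M → G} {S : Set M} (hS : ∀ v ∈ S, ∀ v' ∈ S, v + v' ∈ S)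
    {c : M} (hf : ∀ v ∈ S, f (c + v) = 0) {v a b : M} (hv : v ∈ S) (ha : a ∈ S) (hb : b ∈ S) :
    Δ_[a] (Δ_[b] f) (c + v) = 0 := by
  simp only [fwdDiff, add_assoc, hf v hv, hf _ (hS v hv a ha), hf _ (hS v hv b hb),
    hf _ (hS v hv _ (hS a ha b hb))]
  simp

end fwdDiff

lemma exists_continuous_log (γ : C(unitInterval, ℂ)) (hγ : ∀ t, γ t ≠ 0) :
    ∃ L : C(unitInterval, ℂ), L 0 = log (γ 0) ∧ ∀ t, exp (L t) = γ t := by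
  let γ' : C(unitInterval, {z : ℂ // z ≠ 0}) := ⟨fun t => ⟨γ t, hγ t⟩, by fun_prop⟩
  obtain ⟨L, hL, hL0⟩ := isCoveringMap_exp.exists_path_lifts γ' (log (γ 0))
    (Subtype.ext (exp_log (hγ 0)).symm)
  exact ⟨L, hL0, fun t => congrArg Subtype.val (congrFun hL t)⟩

lemma exists_eq_ellPair {z : ℂ} (h0 : z ≠ 0) (h1 : z ≠ 1) {w : ℂ × ℂ} (hw₀ : exp w.1 = z)
    (hw₁ : exp (-w.2) = 1 - z) : ∃ p q : ℤ, w = ellPair z p q := by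
  obtain ⟨m, hm⟩ := exp_eq_exp_iff_exists_int.mp (hw₀.trans (exp_log h0).symm)
  obtain ⟨n, hn⟩ :=
    exp_eq_exp_iff_exists_int.mp (hw₁.trans (exp_log (sub_ne_zero.mpr h1.symm)).symm)
  refine ⟨2 * m, -(2 * n), Prod.ext ?_ ?_⟩
  · simp only [ellPair, hm]; push_cast; ring
  · simp only [ellPair]; rw [← neg_neg w.2, hn]; push_cast; ring

lemma projC_eq_of_exp {z : ℂ} {w : ℂ × ℂ} (hw₀ : exp w.1 = z) (hw₁ : exp (-w.2) = 1 - z) :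
    projC w = z := by
  have e₀ : exp (2 * w.1) = z ^ 2 := by rw [two_mul, exp_add, hw₀, sq]
  have e₁ : exp (-(2 * w.2)) = (1 - z) ^ 2 := by rw [← mul_neg, two_mul, exp_add, hw₁, sq]
  rw [projC, e₀, e₁]
  ring

lemma mem_CoverSet_of_exp {z : ℂ} {w : ℂ × ℂ} (hw₀ : exp w.1 = z) (hw₁ : exp (-w.2) = 1 - z) :
    w ∈ CoverSet :=
  ⟨1, 1, Or.inl rfl, Or.inl rfl, by rw [hw₀, hw₁]; ring⟩

lemma exists_path_lift_cover (γ : C(unitInterval, ℂ)) (h0 : ∀ t, γ t ≠ 0) (h1 : ∀ t, γ t ≠ 1) :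
    ∃ W : C(unitInterval, Cover), (W 0 : ℂ × ℂ) = ellPair (γ 0) 0 0 ∧
      (∀ t, projC (W t) = γ t) ∧ ∃ p q : ℤ, (W 1 : ℂ × ℂ) = ellPair (γ 1) p q := by
  obtain ⟨L₀, hL₀0, hL₀⟩ := exists_continuous_log γ h0
  obtain ⟨L₁, hL₁0, hL₁⟩ := exists_continuous_log (1 - γ) fun t => sub_ne_zero.mpr (h1 t).symm
  have hexp₀ (t) : exp (L₀ t, -L₁ t).1 = γ t := hL₀ t
  have hexp₁ (t) : exp (-(L₀ t, -L₁ t).2) = 1 - γ t := by simpa using hL₁ t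
  let W : C(unitInterval, Cover) :=
    ⟨fun t => ⟨(L₀ t, -L₁ t), mem_CoverSet_of_exp (hexp₀ t) (hexp₁ t)⟩, by fun_prop⟩
  refine ⟨W, ?_, fun t => projC_eq_of_exp (hexp₀ t) (hexp₁ t),
    exists_eq_ellPair (h0 1) (h1 1) (hexp₀ 1) (hexp₁ 1)⟩
  simp [W, ellPair, hL₀0, hL₁0]

lemma ne_zero_and_ne_one_of_mem_FTSet {x : Fin 5 → ℂ} (hx : x ∈ FTSet) (i : Fin 5) :
    x i ≠ 0 ∧ x i ≠ 1 := by
  have hquot {u v : ℂ} (hu : u ≠ 0) (hv : v ≠ 0) (huv : u ≠ v) : u / v ≠ 0 ∧ u / v ≠ 1 :=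
    ⟨div_ne_zero hu hv, fun h => huv ((div_eq_one_iff_eq hv).mp h)⟩
  have hsub {u : ℂ} (hu : u ≠ 1) : 1 - u ≠ 0 := sub_ne_zero.mpr hu.symm
  obtain ⟨a, b, ⟨ha0, ha1⟩, ⟨hb0, hb1⟩, hab, rfl⟩ := hx
  fin_cases i
  · exact ⟨ha0, ha1⟩
  · exact ⟨hb0, hb1⟩
  · exact hquot hb0 ha0 hab.symm
  · exact hquot (hsub (inv_ne_one.mpr ha1)) (hsub (inv_ne_one.mpr hb1)) (by simpa using hab)
  · exact hquot (hsub ha1) (hsub hb1) (by simpa using hab)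

lemma mem_liftFT₀_of_joinedIn {u₀ u₁ : Fin 5 → Cover} (hu₀ : u₀ ∈ basePts)
    (h : JoinedIn (proj5 ⁻¹' FTSet) u₀ u₁) : u₁ ∈ liftFT₀ :=
  Set.mem_biUnion hu₀ <| (isPathConnected_pathComponentIn h.source_mem).isConnected.isPreconnected
    |>.subset_connectedComponentIn (mem_pathComponentIn_self h.source_mem) pathComponentIn_subset h

lemma exists_mem_liftFT₀ {x₀ x : Fin 5 → ℂ} (hx₀ : x₀ ∈ FTPlus) (h : JoinedIn FTSet x₀ x) :
    ∃ c : Fin 5 → ℤ × ℤ, ∃ u ∈ liftFT₀, ∀ i, (u i : ℂ × ℂ) = ellPair (x i) (c i).1 (c i).2 := by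
  let γ := h.somePath
  have hγ (i : Fin 5) (t) := ne_zero_and_ne_one_of_mem_FTSet (h.somePath_mem t) i
  choose W hW₀ hWproj p q hW₁ using fun i : Fin 5 =>
    exists_path_lift_cover ⟨fun t => γ t i, by fun_prop⟩ (fun t => (hγ i t).1) (fun t => (hγ i t).2)
  let U : Path (fun i => W i 0) (fun i => W i 1) := ⟨ContinuousMap.pi W, rfl, rfl⟩
  have hU : JoinedIn (proj5 ⁻¹' FTSet) (fun i => W i 0) (fun i => W i 1) :=
    ⟨U, fun t => by
      rw [Set.mem_preimage, show proj5 (U t) = γ t from funext fun i => hWproj i t]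
      exact h.somePath_mem t⟩
  refine ⟨fun i => (p i, q i), _, mem_liftFT₀_of_joinedIn ⟨x₀, hx₀, fun i => ?_⟩ hU, fun i => ?_⟩
  · simpa [γ] using hW₀ i
  · simpa [γ] using hW₁ i

def ftTuple (x y : ℂ) : Fin 5 → ℂ := ![x, y, y / x, (1 - x⁻¹) / (1 - y⁻¹), (1 - x) / (1 - y)]

lemma ftTuple_mem_FTSet {x y : ℂ} (hx : x ≠ 0 ∧ x ≠ 1) (hy : y ≠ 0 ∧ y ≠ 1) (hxy : x ≠ y) :
    ftTuple x y ∈ FTSet :=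
  ⟨x, y, hx, hy, hxy, rfl⟩

lemma exists_ftTuple_mem_FTPlus (z : ℂ) : ∃ x y : ℂ, ftTuple x y ∈ FTPlus ∧ y ≠ z := by
  have hx : (((1 + I) / 4) : ℂ) ≠ 0 ∧ ((1 + I) / 4 : ℂ) ≠ 1 := by
    constructor <;> norm_num [Complex.ext_iff]
  have hmem (y : ℂ) (hy : y ≠ 0 ∧ y ≠ 1) (hxy : (1 + I) / 4 ≠ y)
      (him : ∀ i, 0 < (ftTuple ((1 + I) / 4) y i).im) : ftTuple ((1 + I) / 4) y ∈ FTPlus :=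
    ⟨ftTuple_mem_FTSet hx hy hxy, him⟩
  by_cases hz : z = I / 2
  · refine ⟨_, (1 + 2 * I) / 4, hmem _ ?_ ?_ fun i => ?_, by norm_num [hz, Complex.ext_iff]⟩
    · constructor <;> norm_num [Complex.ext_iff]
    · norm_num [Complex.ext_iff]
    · fin_cases i <;> norm_num [ftTuple, Complex.div_im, Complex.div_re, Complex.normSq_apply]
  · refine ⟨_, I / 2, hmem _ ?_ ?_ fun i => ?_, Ne.symm hz⟩
    · constructor <;> norm_num [Complex.ext_iff]
    · norm_num [Complex.ext_iff]
    · fin_cases i <;> norm_num [ftTuple, Complex.div_im, Complex.div_re, Complex.normSq_apply]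

lemma exists_joinedIn_FTSet {z : ℂ} (h0 : z ≠ 0) (h1 : z ≠ 1) :
    ∃ x₀ ∈ FTPlus, ∃ x, x 0 = z ∧ JoinedIn FTSet x₀ x := by
  obtain ⟨a, b, hab, hbz⟩ := exists_ftTuple_mem_FTPlus z
  have ha : a ≠ 0 ∧ a ≠ 1 := ne_zero_and_ne_one_of_mem_FTSet hab.1 0
  have hb : b ≠ 0 ∧ b ≠ 1 := ne_zero_and_ne_one_of_mem_FTSet hab.1 1
  have hab' : a ≠ b := by
    rintro rfl
    exact (ne_zero_and_ne_one_of_mem_FTSet hab.1 2).2 (div_self ha.1)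
  let S : Set ℂ := {0, 1, b}ᶜ
  have hS : IsPathConnected S :=
    (Set.toFinite _).countable.isPathConnected_compl_of_one_lt_rank (by simp)
  have hmemS {x : ℂ} : x ∈ S ↔ (x ≠ 0 ∧ x ≠ 1) ∧ x ≠ b := by simp [S, and_assoc]
  have hf : ContinuousOn (fun x => ftTuple x b) S := by
    have hS0 : ∀ x ∈ S, x ≠ 0 := fun x hx => (hmemS.1 hx).1.1
    unfold ftTuple
    fun_prop (disch := assumption)
  refine ⟨ftTuple a b, hab, ftTuple z b, rfl, ?_⟩
  have hJ := hS.joinedIn a (hmemS.2 ⟨ha, hab'⟩) z (hmemS.2 ⟨⟨h0, h1⟩, hbz.symm⟩)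
  refine (hJ.map_continuousOn hf).mono ?_
  rintro _ ⟨x, hx, rfl⟩
  exact ftTuple_mem_FTSet (hmemS.1 hx).1 hb (hmemS.1 hx).2

def vVec (p₀ p₁ q₀ q₁ q₂ : ℤ) : Fin 5 → ℤ × ℤ :=
  ![(p₀, q₀), (p₁, q₁), (p₁ - p₀, q₂), (p₁ - p₀ + q₁ - q₀, q₂ - q₁), (q₁ - q₀, q₂ - q₁ - p₀)]

lemma vVec_mem_VSet (p₀ p₁ q₀ q₁ q₂ : ℤ) : vVec p₀ p₁ q₀ q₁ q₂ ∈ VSet :=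
  ⟨p₀, p₁, q₀, q₁, q₂, rfl⟩

lemma add_mem_VSet {v v' : Fin 5 → ℤ × ℤ} (hv : v ∈ VSet) (hv' : v' ∈ VSet) : v + v' ∈ VSet := by
  obtain ⟨p₀, p₁, q₀, q₁, q₂, rfl⟩ := hv
  obtain ⟨p₀', p₁', q₀', q₁', q₂', rfl⟩ := hv'
  refine ⟨p₀ + p₀', p₁ + p₁', q₀ + q₀', q₁ + q₁', q₂ + q₂', ?_⟩
  ext i <;> fin_cases i <;>
    simp only [Pi.add_apply, Fin.zero_eta, Fin.mk_one, Fin.reduceFinMk, Matrix.cons_val_zero,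
      Matrix.cons_val_one, Matrix.cons_val, Prod.mk_add_mk] <;> ring

def fiveTermSum (x : Fin 5 → ℂ) (c : Fin 5 → ℤ × ℤ) : EP' :=
  ∑ i : Fin 5, ((-1 : ℤ) ^ (i : ℕ)) • epGen' (x i) (c i).1 (c i).2

lemma shiftPair_ellPair (z : ℂ) (p q : ℤ) (t : ℤ × ℤ) :
    shiftPair (ellPair z p q) t = ellPair z (p + t.1) (q + t.2) := by
  simp only [shiftPair, ellPair]
  push_cast
  ring_nf

lemma fiveTermSum_add_eq_zero {x : Fin 5 → ℂ} (hx : x ∈ FTSet) {c : Fin 5 → ℤ × ℤ}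
    {u : Fin 5 → Cover} (hu : u ∈ liftFT₀)
    (huc : ∀ i, (u i : ℂ × ℂ) = ellPair (x i) (c i).1 (c i).2) {v : Fin 5 → ℤ × ℤ}
    (hv : v ∈ VSet) : fiveTermSum x (c + v) = 0 := by
  have hx' := ne_zero_and_ne_one_of_mem_FTSet hx
  let w : Fin 5 → Cover := fun i =>
    ⟨ellPair (x i) (c i + v i).1 (c i + v i).2, ellPair_mem (hx' i).1 (hx' i).2 _ _⟩
  have hw : w ∈ liftFT := ⟨u, hu, v, hv, fun i => by rw [huc, shiftPair_ellPair]; rfl⟩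
  calc fiveTermSum x (c + v)
      = QuotientAddGroup.mk' epRel'
          (∑ i : Fin 5, ((-1 : ℤ) ^ (i : ℕ)) • FreeAbelianGroup.of (w i)) := by
        simp [fiveTermSum, epGen', hx', epMk', w]
    _ = 0 := (QuotientAddGroup.eq_zero_iff _).mpr (AddSubgroup.subset_closure ⟨w, hw, rfl⟩)

lemma exists_fiveTermSum_eq_zero {z : ℂ} (h0 : z ≠ 0) (h1 : z ≠ 1) :
    ∃ x ∈ FTSet, x 0 = z ∧ ∃ c : Fin 5 → ℤ × ℤ, ∀ v ∈ VSet, fiveTermSum x (c + v) = 0 := by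
  obtain ⟨x₀, hx₀, x, hxz, hJ⟩ := exists_joinedIn_FTSet h0 h1
  obtain ⟨c, u, hu, huc⟩ := exists_mem_liftFT₀ hx₀ hJ
  exact ⟨x, hJ.target_mem, hxz, c, fun v => fiveTermSum_add_eq_zero hJ.target_mem hu huc⟩

lemma fwdDiff_fwdDiff_fiveTermSum (x : Fin 5 → ℂ) (c a b : Fin 5 → ℤ × ℤ) :
    Δ_[a] (Δ_[b] (fiveTermSum x)) c =
      ∑ i : Fin 5,
        ((-1 : ℤ) ^ (i : ℕ)) • Δ_[a i] (Δ_[b i] (Function.uncurry (epGen' (x i)))) (c i) := by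
  simp only [fwdDiff, fiveTermSum, smul_sub, Finset.sum_sub_distrib]
  rfl

lemma fwdDiff_fwdDiff_epGen'_eq_zero_of_fiveTermSum {x : Fin 5 → ℂ} {c : Fin 5 → ℤ × ℤ}
    (hR : ∀ v ∈ VSet, fiveTermSum x (c + v) = 0) {a b : Fin 5 → ℤ × ℤ} (ha : a ∈ VSet)
    (hb : b ∈ VSet) (hab : ∀ i ≠ 0, Δ_[a i] (Δ_[b i] (Function.uncurry (epGen' (x i)))) = 0) :
    Δ_[a 0] (Δ_[b 0] (Function.uncurry (epGen' (x 0)))) = 0 := by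
  ext w
  have hv := vVec_mem_VSet (w.1 - (c 0).1) 0 (w.2 - (c 0).2) 0 0
  have h := fwdDiff_fwdDiff_add_eq_zero (fun _ h _ h' => add_mem_VSet h h') hR hv ha hb
  rw [fwdDiff_fwdDiff_fiveTermSum, Fin.sum_univ_succ,
    Finset.sum_eq_zero fun i _ => by rw [hab i.succ i.succ_ne_zero, Pi.zero_apply, smul_zero]] at h
  have hw : c 0 + vVec (w.1 - (c 0).1) 0 (w.2 - (c 0).2) 0 0 0 = w := by ext <;> simp [vVec]
  simpa [hw] using h

lemma fwdDiff_fwdDiff_epGen'_vertical {z : ℂ} (h0 : z ≠ 0) (h1 : z ≠ 1) (m n : ℤ) :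
    Δ_[(0, m)] (Δ_[(0, n)] (Function.uncurry (epGen' z))) = 0 := by
  obtain ⟨x, -, rfl, c, hR⟩ := exists_fiveTermSum_eq_zero h0 h1
  have h := fwdDiff_fwdDiff_epGen'_eq_zero_of_fiveTermSum hR (vVec_mem_VSet 0 0 m 0 0)
    (vVec_mem_VSet 0 0 n n n) fun i hi => by
      fin_cases i <;> simp [vVec, Prod.mk_zero_zero] at hi ⊢
  simpa [vVec] using h

lemma fwdDiff_fwdDiff_epGen'_horizontal {z : ℂ} (h0 : z ≠ 0) (h1 : z ≠ 1) (m n : ℤ) :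
    Δ_[(m, 0)] (Δ_[(n, 0)] (Function.uncurry (epGen' z))) = 0 := by
  obtain ⟨x, hx, rfl, c, hR⟩ := exists_fiveTermSum_eq_zero h0 h1
  have h4 := ne_zero_and_ne_one_of_mem_FTSet hx 4
  have h := fwdDiff_fwdDiff_epGen'_eq_zero_of_fiveTermSum hR (vVec_mem_VSet m 0 0 0 0)
    (vVec_mem_VSet n n 0 0 0) fun i hi => by
      fin_cases i <;>
        simp [vVec, Prod.mk_zero_zero, fwdDiff_fwdDiff_epGen'_vertical h4.1 h4.2] at hi ⊢
  simpa [vVec] using h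

lemma fwdDiff_fwdDiff_epGen'_antidiagonal {z : ℂ} (h0 : z ≠ 0) (h1 : z ≠ 1) (m n : ℤ) :
    Δ_[(m, -m)] (Δ_[(n, -n)] (Function.uncurry (epGen' z))) = 0 := by
  obtain ⟨x, -, rfl, c, hR⟩ := exists_fiveTermSum_eq_zero h0 h1
  have h := fwdDiff_fwdDiff_epGen'_eq_zero_of_fiveTermSum hR (vVec_mem_VSet m 0 (-m) 0 0)
    (vVec_mem_VSet n n (-n) (-n) 0) fun i hi => by
      fin_cases i <;> simp [vVec, Prod.mk_zero_zero] at hi ⊢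
  simpa [vVec] using h

lemma epGen'_sub_eq_sub_of_fwdDiff_fwdDiff {z : ℂ} {a b a' b' : ℤ}
    (h : Δ_[(a, b)] (Δ_[(a', b')] (Function.uncurry (epGen' z))) = 0) (p q : ℤ) :
    epGen' z p q - epGen' z (p + a') (q + b') =
      epGen' z (p + a) (q + b) - epGen' z (p + a + a') (q + b + b') :=
  fwdDiff_fwdDiff_eq_zero_iff.mp (congrFun h (p, q))

/-- Three families of relations in `EP′(ℂ)`. -/
theorem epGen'_shift_relations (z : ℂ) (h0 : z ≠ 0) (h1 : z ≠ 1) (p q p' q' s : ℤ) :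
    (epGen' z p q - epGen' z p q' = epGen' z p (q - 1) - epGen' z p (q' - 1)) ∧
    (epGen' z p q - epGen' z p' q = epGen' z (p - 1) q - epGen' z (p' - 1) q) ∧
    (epGen' z p q - epGen' z (p + s) (q - s)
      = epGen' z (p + 1) (q - 1) - epGen' z (p + s + 1) (q - s - 1)) := by
  refine ⟨?_, ?_, ?_⟩
  · convert epGen'_sub_eq_sub_of_fwdDiff_fwdDiff
      (fwdDiff_fwdDiff_epGen'_vertical h0 h1 (-1) (q' - q)) p q using 3 <;> ring
  · convert epGen'_sub_eq_sub_of_fwdDiff_fwdDiff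
      (fwdDiff_fwdDiff_epGen'_horizontal h0 h1 (-1) (p' - p)) p q using 3 <;> ring
  · convert epGen'_sub_eq_sub_of_fwdDiff_fwdDiff
      (fwdDiff_fwdDiff_epGen'_antidiagonal h0 h1 1 s) p q using 3 <;> ring

end ExtendedBloch
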